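/- arXiv:math/0505685 — 5 statements merged into one kernel-verified Lean document; each statement's English description precedes it below -/
import Mathlib

section
/- For all natural numbers N ≥ 1, l, and d, the residue at x = 0 of the rational function f_{l,d}(x) = (1+x)^{N-1+Nl} / ((1+x)^N - 1)^{d+1} equals (1/N) · binom(l, d). Equivalently, in the field of Laurent series C((x)), the coefficient of x^{-1} in the Laurent expansion of f_{l,d} at 0 is (1/N) · binom(l, d). -/
open PowerSeries
noncomputable def pp (N : ℕ) : ℂ⟦X⟧ := PowerSeries.mk fun i => (N.choose (i+1) : ℂ)

lemma coeff_one_add_X_pow (N n : ℕ) :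
    PowerSeries.coeff n ((1 + X) ^ N) = (N.choose n : ℂ) := by
  have : ((1 : ℂ⟦X⟧) + X) ^ N = (((1 + Polynomial.X : Polynomial ℂ) ^ N : Polynomial ℂ) : ℂ⟦X⟧) := by
    push_cast
    simp
  rw [this, Polynomial.coeff_coe, Polynomial.coeff_one_add_X_pow]

lemma hXp (N : ℕ) : X * pp N = (1 + X) ^ N - 1 := by
  ext n
  cases n with
  | zero => simp [coeff_zero_X_mul, coeff_one_add_X_pow, map_sub]
  | succ n =>
      rw [coeff_succ_X_mul, map_sub, coeff_one_add_X_pow]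
      simp [pp]

lemma hpp0 (N : ℕ) : constantCoeff (pp N) = (N : ℂ) := by
  simp [pp, ← coeff_zero_eq_constantCoeff]

lemma hderiv (N : ℕ) : pp N + X * d⁄dX ℂ (pp N) = (N : ℕ) • ((1 + X : ℂ⟦X⟧) ^ (N - 1)) := by
  have h := congrArg (d⁄dX ℂ) (hXp N)
  simp only [Derivation.leibniz, map_sub, Derivation.map_one_eq_zero, Derivation.leibniz_pow,
    map_add, derivative_X, smul_eq_mul, add_zero, zero_add, mul_one, sub_zero] at h
  linear_combination h

lemma key (N : ℕ) (hN : 1 ≤ N) (m : ℕ) :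
    PowerSeries.coeff m ((1 + X) ^ (N - 1) * ((pp N)⁻¹) ^ (m + 1)) =
      if m = 0 then (N : ℂ)⁻¹ else 0 := by
  have hN0 : (N : ℂ) ≠ 0 := Nat.cast_ne_zero.mpr (by omega)
  have hpq : pp N * (pp N)⁻¹ = 1 := PowerSeries.mul_inv_cancel _ (by rw [hpp0]; exact hN0)
  set q := (pp N)⁻¹ with hq
  rcases Nat.eq_zero_or_pos m with hm | hm
  · subst hm
    simp only [if_pos rfl, pow_one, coeff_zero_eq_constantCoeff, map_mul, map_pow, map_add,
      map_one, constantCoeff_X, add_zero, one_pow, one_mul, hq, constantCoeff_inv, hpp0,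
      pow_one]
    norm_num
  · rw [if_neg (by omega)]
    obtain ⟨m', rfl⟩ : ∃ m', m = m' + 1 := ⟨m - 1, by omega⟩
    have hpq' : q * pp N = 1 := by rw [mul_comm] at hpq; exact hpq
    have h1 : d⁄dX ℂ q = -(q ^ 2 * d⁄dX ℂ (pp N)) := by
      have := (d⁄dX ℂ).leibniz_of_mul_eq_one hpq'
      simpa [smul_eq_mul] using this
    have hDq : d⁄dX ℂ (q ^ (m' + 1)) =
        -((((m' : ℕ) + 1 : ℕ) : ℂ⟦X⟧) * (q ^ (m' + 2) * d⁄dX ℂ (pp N))) := by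
      rw [Derivation.leibniz_pow, h1]
      simp only [smul_eq_mul, nsmul_eq_mul, Nat.add_sub_cancel]
      push_cast
      ring
    have hxdp : X * d⁄dX ℂ (pp N) = ((N : ℕ) : ℂ⟦X⟧) * ((1 + X : ℂ⟦X⟧) ^ (N - 1)) - pp N := by
      have h := hderiv N
      simp only [nsmul_eq_mul] at h
      linear_combination h
    have hqp : q ^ (m' + 2) * pp N = q ^ (m' + 1) := by
      rw [pow_succ, mul_assoc, hpq', mul_one]
    have hE : X * d⁄dX ℂ (q ^ (m' + 1)) =
        C (-((((m' : ℕ) + 1 : ℕ) : ℂ) * N)) * ((1 + X) ^ (N - 1) * q ^ (m' + 2))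
          + C (((m' : ℕ) + 1 : ℕ) : ℂ) * q ^ (m' + 1) := by
      rw [hDq]
      simp only [map_neg, map_mul, map_natCast]
      linear_combination (-((((m' : ℕ) + 1 : ℕ) : ℂ⟦X⟧)) * q ^ (m' + 2)) * hxdp
        + (((m' : ℕ) + 1 : ℕ) : ℂ⟦X⟧) * hqp
    have h2 := congrArg (PowerSeries.coeff (m' + 1)) hE
    rw [coeff_succ_X_mul, coeff_derivative, map_add, coeff_C_mul, coeff_C_mul] at h2
    have hmN : ((((m' : ℕ) + 1 : ℕ) : ℂ) * N) ≠ 0 := by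
      exact mul_ne_zero (Nat.cast_ne_zero.mpr (by omega)) hN0
    have h3 : (((m' : ℕ) + 1 : ℕ) : ℂ) * N *
        PowerSeries.coeff (m' + 1) ((1 + X) ^ (N - 1) * q ^ (m' + 2)) = 0 := by
      push_cast at h2 ⊢
      linear_combination h2
    have := (mul_eq_zero.mp h3).resolve_left hmN
    convert this using 3

open HahnSeries in
lemma coe_neg_coeff (w : ℂ⟦X⟧) (k : ℤ) (hk : k < 0) :
    (HahnSeries.ofPowerSeries ℤ ℂ w).coeff k = 0 := by
  rw [HahnSeries.ofPowerSeries_apply]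
  apply HahnSeries.embDomain_notin_range
  rintro ⟨n, hn⟩
  replace hn : ((n : ℕ) : ℤ) = k := hn
  omega

lemma sum_coeff {α : Type*} (s : Finset α) (f : α → LaurentSeries ℂ) (n : ℤ) :
    (∑ i ∈ s, f i).coeff n = ∑ i ∈ s, (f i).coeff n := by
  classical
  induction s using Finset.cons_induction with
  | empty => simp
  | cons a s ha ih => rw [Finset.sum_cons, Finset.sum_cons, HahnSeries.coeff_add, ih]

noncomputable def xL : LaurentSeries ℂ := HahnSeries.single 1 1

theorem stmt0 (N l d : ℕ) (hN : 1 ≤ N) :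
    (((1 + xL) ^ (N - 1 + N * l)) / ((1 + xL) ^ N - 1) ^ (d + 1)).coeff (-1)
      = (1 / N : ℂ) * (l.choose d) := by
  classical
  have hN0 : (N : ℂ) ≠ 0 := Nat.cast_ne_zero.mpr (by omega)
  set O := HahnSeries.ofPowerSeries ℤ ℂ with hO
  set P := O (pp N) with hP
  set Q := O ((pp N)⁻¹) with hQ
  have hpq : pp N * (pp N)⁻¹ = 1 := PowerSeries.mul_inv_cancel _ (by rw [hpp0]; exact hN0)
  have hPQ : P * Q = 1 := by rw [hP, hQ, ← map_mul, hpq, map_one]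
  have hx : xL = O X := by rw [xL, hO, HahnSeries.ofPowerSeries_X]
  have hB : ((1 : LaurentSeries ℂ) + xL) ^ N - 1 = xL * P := by
    rw [hx, hP, ← map_one O, ← map_add, ← map_pow, ← map_sub, ← hXp, map_mul]
  have hxLpow : ∀ k : ℕ, xL ^ k = HahnSeries.single (k : ℤ) 1 := by
    intro k
    simp [xL, HahnSeries.single_pow]
  -- inverse of the denominator
  have hinv : ((((1 : LaurentSeries ℂ) + xL) ^ N - 1) ^ (d + 1))⁻¹
      = HahnSeries.single (-(d + 1) : ℤ) 1 * Q ^ (d + 1) := by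
    apply inv_eq_of_mul_eq_one_right
    rw [hB, mul_pow, hxLpow]
    calc HahnSeries.single ((d + 1 : ℕ) : ℤ) 1 * P ^ (d + 1)
          * (HahnSeries.single (-(d + 1) : ℤ) 1 * Q ^ (d + 1))
        = (HahnSeries.single (-(d + 1) : ℤ) 1 * HahnSeries.single ((d + 1 : ℕ) : ℤ) 1)
            * ((P * Q) ^ (d + 1)) := by rw [mul_pow]; ring
      _ = 1 := by
          rw [HahnSeries.single_mul_single, hPQ, one_pow, one_mul,
            show (-(d + 1 : ℤ)) + ((d + 1 : ℕ) : ℤ) = 0 by push_cast; ring,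
            HahnSeries.single_zero_one]
          norm_num
  -- expand the numerator
  have hnum : ((1 : LaurentSeries ℂ) + xL) ^ (N - 1 + N * l)
      = (1 + xL) ^ (N - 1) * ((xL * P + 1) ^ l) := by
    rw [pow_add, pow_mul]
    congr 2
    linear_combination hB
  have hsum : (xL * P + 1) ^ l = ∑ j ∈ Finset.range (l + 1),
      (xL * P) ^ j * 1 ^ (l - j) * (l.choose j : LaurentSeries ℂ) := add_pow _ _ _
  rw [div_eq_mul_inv, hinv, hnum, hsum, Finset.mul_sum, Finset.sum_mul, sum_coeff]
  have hterm : ∀ j ∈ Finset.range (l + 1),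
      ((1 + xL) ^ (N - 1) * ((xL * P) ^ j * 1 ^ (l - j) * (l.choose j : LaurentSeries ℂ))
        * (HahnSeries.single (-(d + 1) : ℤ) 1 * Q ^ (d + 1))).coeff (-1)
      = (l.choose j : ℂ) * (if j = d then (N : ℂ)⁻¹ else 0) := by
    intro j _
    have hwj : ((1 : LaurentSeries ℂ) + xL) ^ (N - 1) * ((xL * P) ^ j * 1 ^ (l - j) * (l.choose j : LaurentSeries ℂ))
        * (HahnSeries.single (-(d + 1) : ℤ) 1 * Q ^ (d + 1))
        = (l.choose j : ℕ) • (HahnSeries.single ((j : ℤ) - (d + 1)) 1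
            * O (pp N ^ j * ((1 + X) ^ (N - 1) * ((pp N)⁻¹) ^ (d + 1)))) := by
      have h1 : ((1 : LaurentSeries ℂ) + xL) ^ (N - 1) = O ((1 + X) ^ (N - 1)) := by
        rw [map_pow, map_add, map_one, ← hx]
      have h2 : HahnSeries.single ((j : ℤ) - (d + 1)) (1 : ℂ)
          = HahnSeries.single ((j : ℤ)) (1 : ℂ) * HahnSeries.single (-(d + 1) : ℤ) 1 := by
        rw [HahnSeries.single_mul_single, one_mul, sub_eq_add_neg]
      rw [nsmul_eq_mul, h2, mul_pow, hxLpow j, h1, hQ, hP]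
      simp only [map_mul, map_pow]
      ring
    rw [hwj, HahnSeries.coeff_nsmul]
    simp only [Pi.smul_apply, nsmul_eq_mul]
    congr 1
    set t : ℤ := (j : ℤ) - (d + 1) with ht
    have hm1 : (-1 : ℤ) = (-1 - t) + t := by ring
    rw [hm1, HahnSeries.coeff_single_mul_add, one_mul]
    have hmt : (-1 : ℤ) - t = (d : ℤ) - j := by rw [ht]; ring
    rw [hmt]
    rcases le_or_gt j d with hjd | hjd
    · have hcast : ((d : ℤ) - j) = ((d - j : ℕ) : ℤ) := by omega
      rw [hcast, hO, HahnSeries.ofPowerSeries_apply_coeff]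
      have hw : pp N ^ j * ((1 + X) ^ (N - 1) * ((pp N)⁻¹) ^ (d + 1))
          = (1 + X) ^ (N - 1) * ((pp N)⁻¹) ^ ((d - j) + 1) := by
        have hsplit : ((pp N)⁻¹) ^ (d + 1) = ((pp N)⁻¹) ^ j * ((pp N)⁻¹) ^ ((d - j) + 1) := by
          rw [← pow_add]
          congr 1
          omega
        have hppj : pp N ^ j * ((pp N)⁻¹) ^ j = 1 := by
          rw [← mul_pow, hpq, one_pow]
        calc pp N ^ j * ((1 + X) ^ (N - 1) * ((pp N)⁻¹) ^ (d + 1))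
            = (pp N ^ j * ((pp N)⁻¹) ^ j) * ((1 + X) ^ (N - 1) * ((pp N)⁻¹) ^ ((d - j) + 1)) := by
              rw [hsplit]; ring
          _ = _ := by rw [hppj, one_mul]
      rw [hw, key N hN (d - j)]
      by_cases hjd' : j = d
      · subst hjd'
        simp
      · rw [if_neg (by omega), if_neg hjd']
    · rw [if_neg (by omega)]
      exact coe_neg_coeff _ _ (by omega)
  rw [Finset.sum_congr rfl hterm]
  simp only [mul_ite, mul_zero]
  rw [Finset.sum_ite_eq' (Finset.range (l + 1)) d fun j => (l.choose j : ℂ) * (N : ℂ)⁻¹]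
  rcases le_or_gt d l with hdl | hdl
  · rw [if_pos (Finset.mem_range.mpr (by omega))]
    rw [one_div]
    ring
  · rw [if_neg (by simp; omega), Nat.choose_eq_zero_of_lt hdl]
    simp
end

section
/- For any natural numbers N ≥ 1, l, m, d, the residue at x = 0 of (1+x)^{N-1+l} / ((1+x)^N - 1)^{d+1} · x^m equals (1/N) · Σ_{p=0}^{m} (-1)^{m-p} · binom(m, p) · binom((l+p)/N, d), where binom(α, d) = α(α-1)⋯(α-d+1)/d! denotes the generalized binomial coefficient for rational α. -/
/-- The generalized binomial coefficient `α(α-1)⋯(α-d+1)/d!` for rational `α`. -/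
noncomputable def genChoose (α : ℚ) (d : ℕ) : ℚ :=
  (∏ i ∈ Finset.range d, (α - i)) / d.factorial

/-!
Write `(1 + x) ^ N - 1 = x h(x)` with `h(x) = ∑_{j<N} (1 + x) ^ j`, so `h(0) = N` and `h` is invertible.
The residue is then the coefficient of `x ^ d` in `(1 + x) ^ (N - 1 + l) x ^ m h⁻¹ ^ (d + 1)`, and
expanding `x ^ m = ((1 + x) - 1) ^ m` reduces it to the case `m = 0`. There the coefficients
`c_d = [x ^ d] (1 + x) ^ b h⁻¹ ^ (d + 1)` satisfy `(d + 1) N c_{d+1} = (b + 1 - (d + 1) N) c_d`,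
obtained by combining `(1 + x) ^ N = 1 + x h` with the vanishing of the residue of the derivative
of `(1 + x) ^ (b + 1) / ((1 + x) ^ N - 1) ^ (d + 1)`. This is the recurrence of
`binom((b + 1) / N - 1, d) / N`, which also has the right value `1 / N` at `d = 0`.
-/

open PowerSeries

theorem genChoose_succ (α : ℚ) (d : ℕ) :
    genChoose α (d + 1) = genChoose α d * (α - d) / (d + 1) := by
  rw [genChoose, genChoose, Finset.prod_range_succ, Nat.factorial_succ]
  push_cast
  field_simp

section Residue

variable {K : Type*} [Field K]

theorem coeff_neg_one_ofPowerSeries_div {f g u : K⟦X⟧} (hgu : g * u = 1) (n : ℕ) :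
    (HahnSeries.ofPowerSeries ℤ K f / HahnSeries.ofPowerSeries ℤ K (X ^ (n + 1) * g)).coeff (-1)
      = coeff n (f * u) := by
  have hg : X ^ (n + 1) * g ≠ 0 :=
    mul_ne_zero (pow_ne_zero _ X_ne_zero) (left_ne_zero_of_mul_eq_one hgu)
  have hdiv : HahnSeries.ofPowerSeries ℤ K f / HahnSeries.ofPowerSeries ℤ K (X ^ (n + 1) * g)
      = HahnSeries.single (-(n + 1 : ℤ)) 1 * HahnSeries.ofPowerSeries ℤ K (f * u) := by
    rw [div_eq_iff ((map_ne_zero_iff _ HahnSeries.ofPowerSeries_injective).mpr hg)]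
    calc HahnSeries.ofPowerSeries ℤ K f
        = HahnSeries.single (-(n + 1 : ℤ)) 1 * HahnSeries.single ((n + 1 : ℕ) : ℤ) 1
            * HahnSeries.ofPowerSeries ℤ K (f * (g * u)) := by
          rw [HahnSeries.single_mul_single, one_mul, hgu, mul_one]; push_cast; simp
      _ = _ := by rw [← HahnSeries.ofPowerSeries_X_pow, map_mul, map_mul, map_mul, map_mul]; ring
  rw [hdiv, show (-1 : ℤ) = n + -(n + 1 : ℤ) by ring, HahnSeries.coeff_single_mul_add, one_mul,
    LaurentSeries.coeff_coe_powerSeries]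

end Residue

noncomputable def powSubOneDivX (R : Type*) [CommRing R] (N : ℕ) : R⟦X⟧ :=
  ∑ j ∈ Finset.range N, (1 + X) ^ j

section

variable {R : Type*} [CommRing R]

theorem X_mul_powSubOneDivX (N : ℕ) : X * powSubOneDivX R N = (1 + X) ^ N - 1 := by
  rw [powSubOneDivX, mul_comm, ← geom_sum_mul, add_sub_cancel_left]

theorem constantCoeff_powSubOneDivX (N : ℕ) : constantCoeff (powSubOneDivX R N) = N := by
  simp [powSubOneDivX]

theorem X_mul_derivative_powSubOneDivX (N : ℕ) :
    X * d⁄dX R (powSubOneDivX R N) = (N : R⟦X⟧) * (1 + X) ^ (N - 1) - powSubOneDivX R N := by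
  have h := congrArg (d⁄dX R) (X_mul_powSubOneDivX (R := R) N)
  rw [Derivation.leibniz, map_sub, Derivation.leibniz_pow, map_add, Derivation.map_one_eq_zero,
    derivative_X] at h
  simp only [smul_eq_mul, nsmul_eq_mul] at h
  linear_combination h

end

section

variable {K : Type*} [Field K] [CharZero K] {N : ℕ}

theorem powSubOneDivX_mul_inv (hN : N ≠ 0) : powSubOneDivX K N * (powSubOneDivX K N)⁻¹ = 1 :=
  PowerSeries.mul_inv_cancel _ (by rw [constantCoeff_powSubOneDivX]; exact_mod_cast hN)

theorem X_mul_derivative_inv_powSubOneDivX (hN : N ≠ 0) :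
    X * d⁄dX K (powSubOneDivX K N)⁻¹
      = (powSubOneDivX K N)⁻¹ - (N : K⟦X⟧) * (1 + X) ^ (N - 1) * (powSubOneDivX K N)⁻¹ ^ 2 := by
  rw [derivative_inv']
  linear_combination (-(powSubOneDivX K N)⁻¹ ^ 2) * X_mul_derivative_powSubOneDivX (R := K) N
    + (powSubOneDivX K N)⁻¹ * powSubOneDivX_mul_inv (K := K) hN

theorem coeff_succ_one_add_X_pow_add_mul_inv_pow (hN : N ≠ 0) (b e : ℕ) :
    coeff (e + 1) ((1 + X) ^ (b + N) * (powSubOneDivX K N)⁻¹ ^ (e + 2))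
      = coeff (e + 1) ((1 + X) ^ b * (powSubOneDivX K N)⁻¹ ^ (e + 2))
        + coeff e ((1 + X) ^ b * (powSubOneDivX K N)⁻¹ ^ (e + 1)) := by
  have hsplit : ((1 : K⟦X⟧) + X) ^ (b + N) * (powSubOneDivX K N)⁻¹ ^ (e + 2)
      = (1 + X) ^ b * (powSubOneDivX K N)⁻¹ ^ (e + 2)
        + X * ((1 + X) ^ b * (powSubOneDivX K N)⁻¹ ^ (e + 1)) := by
    linear_combination ((1 + X) ^ b * (powSubOneDivX K N)⁻¹ ^ (e + 2)) *
      (X_mul_powSubOneDivX (R := K) N).symm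
      + X * (1 + X) ^ b * (powSubOneDivX K N)⁻¹ ^ (e + 1) * powSubOneDivX_mul_inv (K := K) hN
  rw [hsplit, map_add, coeff_succ_X_mul]

theorem X_mul_derivative_one_add_X_pow_mul_inv_pow (hN : N ≠ 0) (b d : ℕ) :
    X * d⁄dX K ((1 + X) ^ (b + 1) * (powSubOneDivX K N)⁻¹ ^ (d + 1))
      = ((b : K⟦X⟧) + 1) * (X * ((1 + X) ^ b * (powSubOneDivX K N)⁻¹ ^ (d + 1)))
        + ((d : K⟦X⟧) + 1) * ((1 + X) ^ (b + 1) * (powSubOneDivX K N)⁻¹ ^ (d + 1))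
        - ((d : K⟦X⟧) + 1) * ((N : K⟦X⟧) *
          ((1 + X) ^ (b + N) * (powSubOneDivX K N)⁻¹ ^ (d + 2))) := by
  have hpow : ((1 : K⟦X⟧) + X) ^ (b + 1) * (1 + X) ^ (N - 1) = (1 + X) ^ (b + N) := by
    rw [← pow_add]; congr 1; omega
  rw [Derivation.leibniz, Derivation.leibniz_pow, Derivation.leibniz_pow, map_add,
    Derivation.map_one_eq_zero, derivative_X]
  simp only [smul_eq_mul, nsmul_eq_mul, Nat.add_sub_cancel, Nat.cast_add, Nat.cast_one]
  linear_combination (((d : K⟦X⟧) + 1) * (1 + X) ^ (b + 1) * (powSubOneDivX K N)⁻¹ ^ d) *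
      X_mul_derivative_inv_powSubOneDivX (K := K) hN
    - ((d : K⟦X⟧) + 1) * (N : K⟦X⟧) * (powSubOneDivX K N)⁻¹ ^ (d + 2) * hpow

theorem succ_mul_coeff_one_add_X_pow_mul_inv_pow (hN : N ≠ 0) (b d : ℕ) :
    (b + 1 : K) * coeff d ((1 + X) ^ b * (powSubOneDivX K N)⁻¹ ^ (d + 1))
      = (d + 1 : K) * N * coeff (d + 1) ((1 + X) ^ (b + N) * (powSubOneDivX K N)⁻¹ ^ (d + 2)) := by
  have h := congrArg (coeff (d + 1)) (X_mul_derivative_one_add_X_pow_mul_inv_pow (K := K) hN b d)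
  have hC : ∀ n : ℕ, (n : K⟦X⟧) + 1 = C ((n : K) + 1) := fun n => by simp
  rw [hC b, hC d, ← map_natCast (C (R := K)) N, map_sub, map_add, coeff_C_mul, coeff_C_mul,
    coeff_C_mul, coeff_C_mul, coeff_succ_X_mul, coeff_succ_X_mul, coeff_derivative] at h
  linear_combination -h

theorem coeff_succ_one_add_X_pow_mul_inv_pow (hN : N ≠ 0) (b d : ℕ) :
    ((d : K) + 1) * N * coeff (d + 1) ((1 + X) ^ b * (powSubOneDivX K N)⁻¹ ^ (d + 2))
      = ((b : K) + 1 - (d + 1) * N) * coeff d ((1 + X) ^ b * (powSubOneDivX K N)⁻¹ ^ (d + 1)) := by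
  have h := succ_mul_coeff_one_add_X_pow_mul_inv_pow (K := K) hN b d
  rw [coeff_succ_one_add_X_pow_add_mul_inv_pow hN] at h
  linear_combination -h

theorem coeff_one_add_X_pow_mul_inv_pow (hN : N ≠ 0) (a d : ℕ) :
    coeff d ((1 + X) ^ (N - 1 + a) * (powSubOneDivX K N)⁻¹ ^ (d + 1))
      = (N : K)⁻¹ * (genChoose ((a : ℚ) / N) d : K) := by
  induction d with
  | zero => simp [genChoose, constantCoeff_powSubOneDivX]
  | succ d ih =>
    have hNK : (N : K) ≠ 0 := by exact_mod_cast hN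
    have hb : ((N - 1 + a : ℕ) : K) + 1 = a + N := by
      rw [Nat.cast_add, Nat.cast_sub (Nat.one_le_iff_ne_zero.mpr hN)]; push_cast; ring
    have h := coeff_succ_one_add_X_pow_mul_inv_pow (K := K) hN (N - 1 + a) d
    rw [hb, ih] at h
    rw [genChoose_succ]
    push_cast
    field_simp at h ⊢
    linear_combination h

theorem coeff_one_add_X_pow_mul_X_pow_mul_inv_pow (hN : N ≠ 0) (l m d : ℕ) :
    coeff d ((1 + X) ^ (N - 1 + l) * X ^ m * (powSubOneDivX K N)⁻¹ ^ (d + 1))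
      = (N : K)⁻¹ * ∑ p ∈ Finset.range (m + 1),
          (-1 : K) ^ (m - p) * m.choose p * (genChoose (((l : ℚ) + p) / N) d : K) := by
  have hXm : (X : K⟦X⟧) ^ m
      = ∑ p ∈ Finset.range (m + 1), (1 + X) ^ p * (-1) ^ (m - p) * (m.choose p : K⟦X⟧) := by
    rw [← add_pow, add_neg_cancel_comm]
  have hterm : ∀ p, (1 + X) ^ (N - 1 + l) * ((1 + X) ^ p * (-1) ^ (m - p) * (m.choose p : K⟦X⟧))
        * (powSubOneDivX K N)⁻¹ ^ (d + 1)
      = C ((-1 : K) ^ (m - p) * m.choose p)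
        * ((1 + X) ^ (N - 1 + (l + p)) * (powSubOneDivX K N)⁻¹ ^ (d + 1)) := fun p => by
    rw [map_mul, map_pow, map_neg, map_one, map_natCast, ← add_assoc, pow_add]
    ring
  simp only [hXm, Finset.mul_sum, Finset.sum_mul, map_sum, hterm, coeff_C_mul,
    coeff_one_add_X_pow_mul_inv_pow hN]
  refine Finset.sum_congr rfl fun p _ => ?_
  push_cast
  ring

end

theorem stmt3 (N l m d : ℕ) (hN : 1 ≤ N) :
    ((((1 + xL) ^ (N - 1 + l)) / ((1 + xL) ^ N - 1) ^ (d + 1)) * xL ^ m).coeff (-1)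
      = (1 / N : ℂ) * ∑ p ∈ Finset.range (m + 1),
          (-1 : ℂ) ^ (m - p) * (m.choose p) *
            ((genChoose (((l : ℚ) + p) / N) d : ℚ) : ℂ) := by
  have hN0 : N ≠ 0 := Nat.one_le_iff_ne_zero.mp hN
  have hX : xL = HahnSeries.ofPowerSeries ℤ ℂ X := HahnSeries.ofPowerSeries_X.symm
  have hOneAddX : 1 + xL = HahnSeries.ofPowerSeries ℤ ℂ (1 + X) := by rw [map_add, map_one, hX]
  have hPowSubOne : (1 + xL) ^ N - 1 = HahnSeries.ofPowerSeries ℤ ℂ (X * powSubOneDivX ℂ N) := by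
    rw [X_mul_powSubOneDivX, map_sub, map_pow, map_one, hOneAddX]
  have hInv : powSubOneDivX ℂ N ^ (d + 1) * (powSubOneDivX ℂ N)⁻¹ ^ (d + 1) = 1 := by
    rw [← mul_pow, powSubOneDivX_mul_inv hN0, one_pow]
  have hQuot : ((1 + xL) ^ (N - 1 + l)) / ((1 + xL) ^ N - 1) ^ (d + 1) * xL ^ m
      = HahnSeries.ofPowerSeries ℤ ℂ ((1 + X) ^ (N - 1 + l) * X ^ m)
        / HahnSeries.ofPowerSeries ℤ ℂ (X ^ (d + 1) * powSubOneDivX ℂ N ^ (d + 1)) := by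
    rw [hPowSubOne, hOneAddX, hX, map_mul, map_mul, map_mul, map_pow, map_pow, map_pow, map_pow]
    ring
  rw [hQuot, coeff_neg_one_ofPowerSeries_div hInv, coeff_one_add_X_pow_mul_X_pow_mul_inv_pow hN0,
    one_div]
end

section
/- Let d, s ≥ 0 and N ≥ 1 be integers. Then Σ_{n=0}^{d} Σ_{k=0}^{d} (-1)^{k-n} · binom(-s, k) · binom(k, n) · binom(d + (s+n)/N, d) = 1, where binom(α, d) for rational α is the generalized binomial coefficient α(α-1)⋯(α-d+1)/d!. -/
/-!
The double sum is Newton's forward-difference expansion `∑ k, C(x, k) Δᵏp(0)` at `x = -s` of the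
polynomial `p(x) = C(d + (s + x)/N, d)` of degree at most `d`. This expansion reproduces `p`
exactly, so the sum is `p(-s) = C(d, d) = 1`.
-/

open Finset Polynomial fwdDiff

lemma genChoose_eq_eval_descPochhammer (x : ℚ) (k : ℕ) :
    genChoose x k = (descPochhammer ℚ k).eval x / k.factorial := by
  rw [genChoose, descPochhammer_eval_eq_prod_range]

lemma genChoose_natCast (m k : ℕ) : genChoose m k = m.choose k := by
  rw [genChoose_eq_eval_descPochhammer, Nat.cast_choose_eq_descPochhammer_div]

lemma genChoose_self (d : ℕ) : genChoose d d = 1 := by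
  rw [genChoose_natCast, Nat.choose_self, Nat.cast_one]

lemma exists_natDegree_le_eval_eq_genChoose_affine (a b : ℚ) (d : ℕ) :
    ∃ P : ℚ[X], P.natDegree ≤ d ∧ ∀ x, P.eval x = genChoose (a * x + b) d := by
  refine ⟨C (d.factorial : ℚ)⁻¹ * (descPochhammer ℚ d).comp (C a * X + C b), ?_, fun x => ?_⟩
  · calc _ ≤ (descPochhammer ℚ d).natDegree * (C a * X + C b).natDegree :=
          (natDegree_C_mul_le _ _).trans natDegree_comp_le
      _ ≤ d * 1 := Nat.mul_le_mul (descPochhammer_natDegree ℚ d).le natDegree_linear_le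
      _ = d := mul_one d
  · simp [genChoose_eq_eval_descPochhammer, div_eq_inv_mul]

theorem eval_eq_sum_genChoose_mul_fwdDiff_iter (P : ℚ[X]) {d : ℕ} (hP : P.natDegree ≤ d)
    (x : ℚ) : P.eval x = ∑ k ∈ range (d + 1), genChoose x k * Δ_[1] ^[k] P.eval 0 := by
  set Q : ℚ[X] := ∑ k ∈ range (d + 1),
    C (Δ_[1] ^[k] P.eval 0 / k.factorial) * descPochhammer ℚ k
  have hQ : ∀ y, Q.eval y = ∑ k ∈ range (d + 1), genChoose y k * Δ_[1] ^[k] P.eval 0 := by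
    intro y
    simp only [Q, eval_finsetSum, eval_mul, eval_C, genChoose_eq_eval_descPochhammer]
    exact sum_congr rfl fun k _ => by ring
  -- Both sides are polynomials agreeing at every natural number, by the Gregory–Newton formula.
  have hnat : ∀ m : ℕ, P.eval (m : ℚ) = Q.eval (m : ℚ) := by
    intro m
    have hext : ∑ k ∈ range (d + 1), (m.choose k : ℚ) * Δ_[1] ^[k] P.eval 0
        = ∑ k ∈ range (d + m + 1), (m.choose k : ℚ) * Δ_[1] ^[k] P.eval 0 := by
      refine sum_subset (range_subset_range.mpr (by omega)) fun k hk hkd => ?_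
      rw [Polynomial.fwdDiff_iter_eq_zero_of_degree_lt (by simp at hk hkd; omega)]
      simp
    have newton := shift_eq_sum_fwdDiff_iter (1 : ℚ) P.eval m 0
    simp only [zero_add, nsmul_eq_mul, mul_one] at newton
    simp only [hQ, newton, genChoose_natCast]
    rw [hext,
      ← sum_subset (range_subset_range.mpr (by omega : m + 1 ≤ d + m + 1))]
    intro k _ hkm
    rw [Nat.choose_eq_zero_of_lt (by simpa using hkm), Nat.cast_zero, zero_mul]
  have hPQ : P = Q := eq_of_infinite_eval_eq P Q <|
    (Set.infinite_range_of_injective Nat.cast_injective).mono (by rintro _ ⟨m, rfl⟩; exact hnat m)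
  rw [← hQ, ← hPQ]

lemma fwdDiff_iter_eq_sum_range_zpow (f : ℚ → ℚ) {k d : ℕ} (hk : k ≤ d) (y : ℚ) :
    Δ_[1] ^[k] f y =
      ∑ n ∈ range (d + 1), (-1 : ℚ) ^ ((k : ℤ) - n) * k.choose n * f (y + n) := by
  rw [fwdDiff_iter_eq_sum_shift, ← sum_subset (range_subset_range.mpr (by omega : k + 1 ≤ d + 1))]
  · refine sum_congr rfl fun n hn => ?_
    rw [mem_range] at hn
    rw [← Nat.cast_sub (by omega : n ≤ k), zpow_natCast, nsmul_one, zsmul_eq_mul]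
    push_cast
    ring
  · intro n _ hnk
    rw [Nat.choose_eq_zero_of_lt (by simpa using hnk), Nat.cast_zero, mul_zero, zero_mul]

theorem stmt7_general (d s N : ℕ) :
    ∑ n ∈ Finset.range (d + 1), ∑ k ∈ Finset.range (d + 1),
        (-1 : ℚ) ^ ((k : ℤ) - (n : ℤ)) * genChoose (-(s : ℚ)) k * (k.choose n : ℚ) *
          genChoose ((d : ℚ) + ((s : ℚ) + n) / N) d
      = 1 := by
  obtain ⟨P, hdeg, hP⟩ :=
    exists_natDegree_le_eval_eq_genChoose_affine (N : ℚ)⁻¹ (d + s / N) d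
  have hP' : ∀ x : ℚ, genChoose (d + (s + x) / N) d = P.eval x := fun x => by
    rw [hP]; ring_nf
  calc _ = ∑ k ∈ range (d + 1), genChoose (-(s : ℚ)) k *
        ∑ n ∈ range (d + 1), (-1 : ℚ) ^ ((k : ℤ) - n) * k.choose n * P.eval (0 + (n : ℚ)) := by
        rw [sum_comm]
        refine sum_congr rfl fun k _ => ?_
        rw [mul_sum]
        refine sum_congr rfl fun n _ => ?_
        rw [hP', zero_add]
        ring
    _ = ∑ k ∈ range (d + 1), genChoose (-(s : ℚ)) k * Δ_[1] ^[k] P.eval 0 :=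
        sum_congr rfl fun k hk => by
          rw [fwdDiff_iter_eq_sum_range_zpow _ (Nat.lt_succ_iff.mp (mem_range.mp hk))]
    _ = 1 := by
        rw [← eval_eq_sum_genChoose_mul_fwdDiff_iter P hdeg, ← hP', add_neg_cancel, zero_div,
          add_zero, genChoose_self]

theorem stmt7 (d s N : ℕ) (hN : 1 ≤ N) :
    ∑ n ∈ Finset.range (d + 1), ∑ k ∈ Finset.range (d + 1),
        (-1 : ℚ) ^ ((k : ℤ) - (n : ℤ)) * genChoose (-(s : ℚ)) k * (k.choose n : ℚ) *
          genChoose ((d : ℚ) + ((s : ℚ) + n) / N) d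
      = 1 :=
  stmt7_general d s N
end

section
/- Let d, s ≥ 0 and N ≥ 1 be integers, let c_n = Σ_{k=0}^{d} (-1)^{k-n} binom(-s,k) binom(k,n), and work in A = C[x]/(x^{d+1}) with y = 1 - (1+x)^{-N}. Then Σ_{j=0}^{d} (Σ_{n=0}^{d} c_n · binom(j + (s+n)/N, j)) · y^j = Σ_{j=0}^{d} y^j in A. -/
abbrev Atrunc (d : ℕ) : Type :=
  Polynomial ℂ ⧸ Ideal.span {(Polynomial.X : Polynomial ℂ) ^ (d + 1)}

noncomputable def xbar (d : ℕ) : Atrunc d := Ideal.Quotient.mk _ Polynomial.X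

/-
Write `P = (1 + x) ^ N`, so that `1 - y = P⁻¹`. Since `binom(j + β, j) y ^ j = binom(-(β + 1), j) (-y) ^ j`,
the inner sum over `j` for a fixed `n` is the binomial series of `(1 - y) ^ (-(s + n + N) / N)`, truncated
where `y` becomes nilpotent. Its `N`-th power is `(1 - y) ^ (-(s + n + N)) = P ^ (s + n + N)`, and `N`-th roots
of elements of the form `1 + nilpotent` are unique in a `ℚ`-algebra, so it equals `(1 + x) ^ (s + n + N)`.
The coefficients `c n` are those of `(1 + x) ^ (-s) = ∑ₖ binom(-s, k) ((1 + x) - 1) ^ k` in the powers of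
`1 + x`, so the left side collapses to `(1 + x) ^ (-s) (1 + x) ^ (s + N) = P`, which is also the geometric
sum `∑ⱼ y ^ j = (1 - y)⁻¹`.
-/

open Finset Polynomial PowerSeries

theorem genChoose_eq_choose (α : ℚ) (k : ℕ) : genChoose α k = Ring.choose α k := by
  rw [genChoose, Ring.choose_eq_smul, ← aeval_eq_smeval, aeval_def, eval₂_eq_eval_map,
    descPochhammer_map, descPochhammer_eval_eq_prod_range, smul_eq_mul, div_eq_inv_mul]

theorem neg_one_zpow_natCast_sub {K : Type*} [DivisionRing K] (k n : ℕ) :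
    (-1 : K) ^ ((k : ℤ) - n) = (-1) ^ (n + k) := by
  rw [zpow_sub₀ (by norm_num), zpow_natCast, zpow_natCast, div_eq_mul_inv, ← inv_pow, inv_neg_one,
    ← pow_add, add_comm]

section CommRing

variable {A : Type*} [CommRing A]

theorem dvd_one_add_pow_sub_one (x : A) (M : ℕ) : x ∣ (1 + x) ^ M - 1 := by
  simpa using sub_dvd_pow_sub_pow (1 + x) 1 M

variable {n N : ℕ} {u x y : A}

theorem eval_trunc_coe (hu : u ^ n = 0) (p : A[X]) : (trunc n (p : A⟦X⟧)).eval u = p.eval u := by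
  obtain ⟨q, hq⟩ : Polynomial.X ^ n ∣ p - trunc n (p : A⟦X⟧) :=
    X_pow_dvd_iff.2 fun m hm => by simp [coeff_trunc, hm]
  have := congrArg (Polynomial.eval u) hq
  simp only [eval_sub, eval_mul, eval_pow, eval_X, hu, zero_mul, sub_eq_zero] at this
  exact this.symm

theorem eval_trunc_mul (hu : u ^ n = 0) (f g : A⟦X⟧) :
    (trunc n (f * g)).eval u = (trunc n f).eval u * (trunc n g).eval u := by
  rw [← trunc_trunc_mul_trunc, ← Polynomial.coe_mul, eval_trunc_coe hu, eval_mul]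

theorem eval_trunc_eq_sum (f : A⟦X⟧) :
    (trunc n f).eval u = ∑ j ∈ range n, PowerSeries.coeff j f * u ^ j :=
  eval₂_trunc_eq_sum_range u (RingHom.id A) n f

theorem pow_eq_zero_of_one_sub_mul_one_add_pow_eq_one (hx : x ^ n = 0)
    (hy : (1 - y) * (1 + x) ^ N = 1) : y ^ n = 0 := by
  have hxy : x ∣ y := by
    have : y = (1 - y) * ((1 + x) ^ N - 1) := by linear_combination (-1 : A) * hy
    rw [this]
    exact (dvd_one_add_pow_sub_one x N).mul_left _
  obtain ⟨w, rfl⟩ := hxy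
  rw [mul_pow, hx, zero_mul]

variable [Algebra ℚ A]

theorem eq_of_pow_eq_pow_of_isNilpotent_sub_one {a b : A}
    (ha : IsNilpotent (a - 1)) (hb : IsNilpotent (b - 1)) (hN : N ≠ 0)
    (h : a ^ N = b ^ N) : a = b := by
  set S := ∑ i ∈ range N, a ^ i * b ^ (N - 1 - i)
  have hS : IsNilpotent (S - N) := by
    have hone : ∀ z : A, IsNilpotent (z - 1) → Ideal.Quotient.mk (nilradical A) z = 1 := by
      intro z hz
      rw [← sub_eq_zero, ← map_one (Ideal.Quotient.mk _), ← map_sub, Ideal.Quotient.eq_zero_iff_mem]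
      exact hz
    rw [← mem_nilradical, ← Ideal.Quotient.eq_zero_iff_mem]
    simp [S, hone a ha, hone b hb]
  have hNunit : IsUnit (N : A) := by
    simpa using (isUnit_iff_ne_zero.2 (Nat.cast_ne_zero.2 hN : (N : ℚ) ≠ 0)).map (algebraMap ℚ A)
  have hSunit : IsUnit S := by
    simpa using hS.isUnit_add_left_of_commute hNunit (Commute.all _ _)
  rw [← sub_eq_zero, ← hSunit.mul_right_eq_zero, geom_sum₂_mul, h, sub_self]

/-- `(1 + u) ^ r` for `u ^ n = 0`, as the truncated binomial series. -/
noncomputable def truncBinomial (n : ℕ) (r : ℚ) (u : A) : A :=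
  (trunc n (binomialSeries A r)).eval u

theorem truncBinomial_eq_sum (r : ℚ) :
    truncBinomial n r u = ∑ j ∈ range n, Ring.choose r j • u ^ j := by
  simp [truncBinomial, eval_trunc_eq_sum]

theorem truncBinomial_add (hu : u ^ n = 0) (r s : ℚ) :
    truncBinomial n (r + s) u = truncBinomial n r u * truncBinomial n s u := by
  rw [truncBinomial, binomialSeries_add, eval_trunc_mul hu]; rfl

theorem truncBinomial_natCast (hu : u ^ n = 0) (k : ℕ) :
    truncBinomial n k u = (1 + u) ^ k := by
  rw [truncBinomial, binomialSeries_nat,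
    show ((1 + PowerSeries.X) ^ k : A⟦X⟧) = (((1 + Polynomial.X) ^ k : A[X]) : A⟦X⟧) by simp,
    eval_trunc_coe hu]
  simp

theorem truncBinomial_pow (hu : u ^ n = 0) (r : ℚ) (k : ℕ) :
    truncBinomial n r u ^ k = truncBinomial n (k * r) u := by
  induction k with
  | zero => simpa using (truncBinomial_natCast hu 0).symm
  | succ k ih => rw [pow_succ, ih, ← truncBinomial_add hu]; push_cast; ring_nf

theorem truncBinomial_neg_natCast_mul_pow (hu : u ^ n = 0) (k : ℕ) :
    truncBinomial n (-k) u * (1 + u) ^ k = 1 := by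
  rw [← truncBinomial_natCast hu, ← truncBinomial_add hu, neg_add_cancel, ← Nat.cast_zero,
    truncBinomial_natCast hu, pow_zero]

theorem isNilpotent_truncBinomial_sub_one (hu : u ^ n = 0) (r : ℚ) :
    IsNilpotent (truncBinomial n r u - 1) := by
  cases n with
  | zero =>
    have : Subsingleton A := subsingleton_of_zero_eq_one (by simpa using hu.symm)
    exact ⟨1, Subsingleton.elim _ _⟩
  | succ n =>
    have hconst : (trunc (n + 1) (binomialSeries A r)).eval 0 = 1 := by
      simp [← coeff_zero_eq_eval_zero, coeff_trunc]
    obtain ⟨w, hw⟩ := Polynomial.sub_dvd_eval_sub u 0 (trunc (n + 1) (binomialSeries A r))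
    rw [truncBinomial, ← hconst, hw, sub_zero]
    exact (Commute.all _ _).isNilpotent_mul_right ⟨n + 1, hu⟩

theorem sum_neg_one_zpow_mul_choose_smul_pow {d k : ℕ} (hk : k ≤ d) (z : A) :
    ∑ n ∈ range (d + 1), ((-1 : ℚ) ^ ((k : ℤ) - n) * k.choose n) • z ^ n = (z - 1) ^ k := by
  rw [sub_pow, ← sum_subset (range_subset_range.2 (Nat.succ_le_succ hk))]
  · refine sum_congr rfl fun n _ => ?_
    rw [neg_one_zpow_natCast_sub, Algebra.smul_def]
    simp only [map_mul, map_pow, map_neg, map_one, map_natCast, one_pow, mul_one]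
    ring
  · intro n _ hn
    rw [Nat.choose_eq_zero_of_lt (by simpa using hn)]
    simp

theorem sum_sum_smul_one_add_pow_eq_truncBinomial (d : ℕ) (r : ℚ) :
    ∑ n ∈ range (d + 1), (∑ k ∈ range (d + 1),
      (-1 : ℚ) ^ ((k : ℤ) - n) * genChoose r k * k.choose n) • (1 + x) ^ n
      = truncBinomial (d + 1) r x := by
  simp only [Finset.sum_smul]
  rw [sum_comm, truncBinomial_eq_sum]
  refine sum_congr rfl fun k hk => ?_
  have hexpand := sum_neg_one_zpow_mul_choose_smul_pow (Nat.lt_succ_iff.1 (mem_range.1 hk)) (1 + x)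
  rw [add_sub_cancel_left] at hexpand
  rw [← genChoose_eq_choose, ← hexpand, smul_sum]
  refine sum_congr rfl fun n _ => ?_
  rw [smul_smul]
  ring_nf

theorem sum_genChoose_smul_pow (hx : x ^ n = 0) (hy : (1 - y) * (1 + x) ^ N = 1) (hN : N ≠ 0)
    {β : ℚ} {M : ℕ} (hβ : N * β + N = M) :
    ∑ j ∈ range n, genChoose (j + β) j • y ^ j = (1 + x) ^ M := by
  have hu : (-y) ^ n = 0 := by
    rw [neg_pow, pow_eq_zero_of_one_sub_mul_one_add_pow_eq_one hx hy, mul_zero]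
  have hseries : ∑ j ∈ range n, genChoose (j + β) j • y ^ j = truncBinomial n (-(β + 1)) (-y) := by
    rw [truncBinomial_eq_sum]
    refine sum_congr rfl fun j _ => ?_
    rw [Ring.choose_neg, show β + 1 + j - 1 = j + β by ring, ← genChoose_eq_choose, neg_pow,
      Units.smul_def, Int.coe_negOnePow_natCast, smul_assoc, zsmul_eq_mul, Int.cast_pow,
      Int.cast_neg, Int.cast_one, mul_smul_comm, ← mul_assoc, ← mul_pow]
    simp
  rw [hseries]
  refine eq_of_pow_eq_pow_of_isNilpotent_sub_one (isNilpotent_truncBinomial_sub_one hu _) ?_ hN ?_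
  · obtain ⟨w, hw⟩ := dvd_one_add_pow_sub_one x M
    rw [hw]
    exact (Commute.all _ _).isNilpotent_mul_right ⟨n, hx⟩
  · rw [truncBinomial_pow hu, show (N : ℚ) * -(β + 1) = -M by linarith]
    refine left_inv_eq_right_inv (a := (1 - y) ^ M) ?_ ?_
    · simpa [sub_eq_add_neg] using truncBinomial_neg_natCast_mul_pow hu M
    · rw [← pow_mul, mul_comm M N, pow_mul, ← mul_pow, hy, one_pow]

theorem sum_sum_mul_genChoose_smul_pow {d s : ℕ} (hN : N ≠ 0) {c : ℕ → ℚ}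
    (hc : ∀ n, c n = ∑ k ∈ range (d + 1),
      (-1 : ℚ) ^ ((k : ℤ) - (n : ℤ)) * genChoose (-(s : ℚ)) k * (k.choose n : ℚ))
    (hx : x ^ (d + 1) = 0) (hy : (1 - y) * (1 + x) ^ N = 1) :
    ∑ j ∈ range (d + 1), (∑ n ∈ range (d + 1), c n * genChoose (j + (s + n) / N) j) • y ^ j
      = ∑ j ∈ range (d + 1), y ^ j := by
  calc ∑ j ∈ range (d + 1), (∑ n ∈ range (d + 1), c n * genChoose (j + (s + n) / N) j) • y ^ j
      = ∑ n ∈ range (d + 1), c n • ∑ j ∈ range (d + 1), genChoose (j + (s + n) / N) j • y ^ j := by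
        simp only [sum_smul, mul_smul, smul_sum]
        exact sum_comm
    _ = ∑ n ∈ range (d + 1), c n • (1 + x) ^ (s + n + N) := by
        refine sum_congr rfl fun n _ => ?_
        rw [sum_genChoose_smul_pow hx hy hN]
        field_simp
        push_cast
        ring
    _ = (∑ n ∈ range (d + 1), c n • (1 + x) ^ n) * (1 + x) ^ s * (1 + x) ^ N := by
        rw [Finset.sum_mul, Finset.sum_mul]
        refine sum_congr rfl fun n _ => ?_
        rw [smul_mul_assoc, smul_mul_assoc, ← pow_add, ← pow_add, add_comm n s]
    _ = (1 + x) ^ N := by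
        simp only [hc]
        rw [sum_sum_smul_one_add_pow_eq_truncBinomial, truncBinomial_neg_natCast_mul_pow hx, one_mul]
    _ = ∑ j ∈ range (d + 1), y ^ j := by
        have hgeom := geom_sum_mul_neg y (d + 1)
        rw [pow_eq_zero_of_one_sub_mul_one_add_pow_eq_one hx hy, sub_zero] at hgeom
        exact (left_inv_eq_right_inv hgeom hy).symm

end CommRing

theorem xbar_pow_succ_eq_zero (d : ℕ) : xbar d ^ (d + 1) = 0 := by
  rw [xbar, ← map_pow, Ideal.Quotient.eq_zero_iff_mem]
  exact Ideal.subset_span rfl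

theorem stmt8 (d s N : ℕ) (hN : 1 ≤ N) (c : ℕ → ℚ)
    (hc : ∀ n, c n = ∑ k ∈ Finset.range (d + 1),
      (-1 : ℚ) ^ ((k : ℤ) - (n : ℤ)) * genChoose (-(s : ℚ)) k * (k.choose n : ℚ))
    (y : Atrunc d) (hy : y = 1 - Ring.inverse ((1 + xbar d) ^ N)) :
    ∑ j ∈ Finset.range (d + 1),
        algebraMap ℂ (Atrunc d)
          (((∑ n ∈ Finset.range (d + 1),
              c n * genChoose ((j : ℚ) + ((s : ℚ) + n) / N) j : ℚ) : ℂ)) * y ^ j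
      = ∑ j ∈ Finset.range (d + 1), y ^ j := by
  have hx := xbar_pow_succ_eq_zero d
  have hy' : (1 - y) * (1 + xbar d) ^ N = 1 := by
    rw [hy, sub_sub_cancel]
    exact Ring.inverse_mul_cancel _ ((IsNilpotent.isUnit_one_add ⟨d + 1, hx⟩).pow N)
  have hcast (q : ℚ) (z : Atrunc d) : algebraMap ℂ (Atrunc d) (q : ℂ) * z = q • z := by
    rw [Algebra.smul_def (A := Atrunc d), IsScalarTower.algebraMap_apply ℚ ℂ, eq_ratCast]
  simp only [hcast]
  exact sum_sum_mul_genChoose_smul_pow (by omega) hc hx hy'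
end

section
/- Let r ≥ 2 and 2 ≤ l ≤ r. For variables λ_1, ..., λ_r, let σ_{l-1} denote the (l-1)-st elementary symmetric polynomial in λ_1,...,λ_r, let σ_{l-1;i} denote the (l-1)-st elementary symmetric polynomial in the r-1 variables omitting λ_i. Then, as an identity of rational functions (or of polynomials after clearing denominators): Σ_{1 ≤ i < j ≤ r} (λ_i σ_{l-1;i} − λ_j σ_{l-1;j})/(λ_i − λ_j) = (1/2)(r−l)(r−l+1) · σ_{l-1}. -/
/-!
Expanding along `λ_j` gives `λ_i σ_{l-1;i} - λ_j σ_{l-1;j} = (λ_i - λ_j) σ_{l-1;ij}`, where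
`σ_{l-1;ij}` omits both `λ_i` and `λ_j`, so every summand is a polynomial. Summing over the pairs,
the monomial of an `(l-1)`-subset `A` appears once for each pair `i < j` outside `A`, that is
`C(r-l+1, 2)` times.
-/

open Finset

theorem Multiset.esymm_cons_succ {R : Type*} [CommSemiring R] (a : R) (s : Multiset R) (k : ℕ) :
    (a ::ₘ s).esymm (k + 1) = s.esymm (k + 1) + a * s.esymm k := by
  simp only [Multiset.esymm, Multiset.powersetCard_cons, Multiset.map_add, Multiset.sum_add,
    Multiset.map_map, Function.comp_def, Multiset.prod_cons, Multiset.sum_map_mul_left]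

namespace Finset

section

variable {ι R : Type*} [DecidableEq ι]

theorem esymm_map_val_succ_of_mem [CommSemiring R] (f : ι → R) {s : Finset ι} {j : ι}
    (hj : j ∈ s) (k : ℕ) :
    (s.val.map f).esymm (k + 1)
      = ((s.erase j).val.map f).esymm (k + 1) + f j * ((s.erase j).val.map f).esymm k := by
  conv_lhs => rw [← insert_erase hj, insert_val_of_notMem (notMem_erase j s)]
  rw [Multiset.map_cons, Multiset.esymm_cons_succ]

theorem mul_esymm_erase_sub_mul_esymm_erase [CommRing R] (f : ι → R) {s : Finset ι} {i j : ι}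
    (hi : i ∈ s) (hj : j ∈ s) (hij : i ≠ j) (k : ℕ) :
    f i * ((s.erase i).val.map f).esymm k - f j * ((s.erase j).val.map f).esymm k
      = (f i - f j) * (((s.erase i).erase j).val.map f).esymm k := by
  cases k with
  | zero => simp [Multiset.esymm]
  | succ k =>
    rw [esymm_map_val_succ_of_mem f (mem_erase.mpr ⟨hij.symm, hj⟩),
      esymm_map_val_succ_of_mem f (mem_erase.mpr ⟨hij, hi⟩), erase_right_comm]
    ring

end

theorem sum_lt_pairs_sum_powersetCard_erase_erase {ι M : Type*} [Fintype ι] [LinearOrder ι]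
    [AddCommMonoid M] (g : Finset ι → M) (k : ℕ) :
    ∑ p ∈ univ.filter (fun p : ι × ι => p.1 < p.2),
        ∑ A ∈ ((univ.erase p.1).erase p.2).powersetCard k, g A
      = (Fintype.card ι - k).choose 2 • ∑ A ∈ univ.powersetCard k, g A := by
  have hfilter (p : ι × ι) : ((univ.erase p.1).erase p.2).powersetCard k
      = (univ.powersetCard k).filter (fun A => p.1 ∉ A ∧ p.2 ∉ A) := by
    ext A
    simp only [mem_powersetCard, mem_filter, subset_erase, subset_univ, true_and]
    tauto
  rw [sum_congr rfl fun p _ => by rw [hfilter, sum_filter], sum_comm, smul_sum]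
  refine sum_congr rfl fun A hA => ?_
  have hpairs : univ.filter (fun p : ι × ι => p.1 < p.2 ∧ p.1 ∉ A ∧ p.2 ∉ A)
      = (Aᶜ ×ˢ Aᶜ).filter (fun p => p.1 < p.2) := by
    ext p; simp [and_comm]
  rw [← sum_filter, filter_filter, sum_const, hpairs, card_product_filter_lt, card_compl,
    (mem_powersetCard.mp hA).2]

end Finset

theorem stmt13_general (r l : ℕ) (hl : 2 ≤ l) (hlr : l ≤ r)
    (lam : Fin r → ℂ) (hinj : Function.Injective lam)
    (σ : ℕ → Finset (Fin r) → ℂ)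
    (hσ : ∀ k T, σ k T = ∑ A ∈ T.powersetCard k, ∏ a ∈ A, lam a) :
    ∑ p ∈ Finset.univ.filter (fun p : Fin r × Fin r => p.1 < p.2),
        (lam p.1 * σ (l - 1) (Finset.univ.erase p.1)
          - lam p.2 * σ (l - 1) (Finset.univ.erase p.2)) / (lam p.1 - lam p.2)
      = (1 / 2 : ℂ) * ((r : ℂ) - l) * ((r : ℂ) - l + 1) * σ (l - 1) Finset.univ := by
  simp only [hσ, ← esymm_map_val]
  have hsummand (p : Fin r × Fin r) (hp : p ∈ univ.filter fun p : Fin r × Fin r => p.1 < p.2) :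
      (lam p.1 * ((univ.erase p.1).val.map lam).esymm (l - 1)
          - lam p.2 * ((univ.erase p.2).val.map lam).esymm (l - 1)) / (lam p.1 - lam p.2)
        = (((univ.erase p.1).erase p.2).val.map lam).esymm (l - 1) := by
    have hne : p.1 ≠ p.2 := (mem_filter.mp hp).2.ne
    rw [mul_esymm_erase_sub_mul_esymm_erase lam (mem_univ _) (mem_univ _) hne,
      mul_div_cancel_left₀ _ (sub_ne_zero.mpr (hinj.ne hne))]
  rw [sum_congr rfl hsummand]
  simp only [esymm_map_val]
  rw [sum_lt_pairs_sum_powersetCard_erase_erase, nsmul_eq_mul, Fintype.card_fin,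
    Nat.cast_choose_two, Nat.cast_sub (by omega), Nat.cast_sub (by omega)]
  push_cast
  ring

theorem stmt13 (r l : ℕ) (hr : 2 ≤ r) (hl : 2 ≤ l) (hlr : l ≤ r)
    (lam : Fin r → ℂ) (hinj : Function.Injective lam)
    (σ : ℕ → Finset (Fin r) → ℂ)
    (hσ : ∀ k T, σ k T = ∑ A ∈ T.powersetCard k, ∏ a ∈ A, lam a) :
    ∑ p ∈ Finset.univ.filter (fun p : Fin r × Fin r => p.1 < p.2),
        (lam p.1 * σ (l - 1) (Finset.univ.erase p.1)
          - lam p.2 * σ (l - 1) (Finset.univ.erase p.2)) / (lam p.1 - lam p.2)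
      = (1 / 2 : ℂ) * ((r : ℂ) - l) * ((r : ℂ) - l + 1) * σ (l - 1) Finset.univ :=
  stmt13_general r l hl hlr lam hinj σ hσ
end
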